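/- Let S and A be finite nonempty types. Let π, π' : S → A → ℝ be policies, i.e., for every s ∈ S, π(s,·) and π'(s,·) are nonnegative and sum to 1 over A. Let P : S → A → S → ℝ be a transition function, i.e., for every s,a, P(s,a,·) is nonnegative and sums to 1 over S. Define the induced one-step state kernels K(s,s') = Σ_{a∈A} π(s,a)·P(s,a,s') and K'(s,s') = Σ_{a∈A} π'(s,a)·P(s,a,s'), and for c ≥ 1 define the abstracted (c-step) transition functions K^c and K'^c by iterated composition (K^1 = K and K^{n+1}(s,s'') = Σ_{s'} K(s,s')·K^n(s',s'')). Suppose ε ∈ [0,1] and the two policies are close in the sense that (1/2)·Σ_{a∈A} |π'(s,a) − π(s,a)| ≤ ε for every s ∈ S. Then for every c ≥ 1 and all s, s' ∈ S, |K'^c(s,s') − K^c(s,s')| ≤ 2εc. -/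

import Mathlib

/-!
Write `K` and `K'` as row-stochastic matrices; then `kpow K c = K ^ c`. In the `ℓ∞` operator
norm (maximal absolute row sum) a stochastic matrix has norm at most `1`, so telescoping
`K'^(n+1) - K^(n+1) = K' (K'^n - K^n) + (K' - K) K^n` gives `‖K'^c - K^c‖ ≤ c ‖K' - K‖`.
Averaging against the stochastic kernel `P` does not increase `ℓ¹` distances, so each row of
`K' - K` has absolute sum at most `∑ a, |π' s a - π s a| ≤ 2ε`, and entries are bounded by
the norm.
-/

open Finset

/-- `kpow K c` is the `c`-fold composition `K^c` of the kernel `K` (for `c ≥ 1`):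
`K^1 = K` and `K^{n+1}(s, s'') = ∑ s', K(s, s') * K^n(s', s'')`. -/
noncomputable def kpow {S : Type*} [Fintype S] (K : S → S → ℝ) : ℕ → S → S → ℝ
  | 0 => fun _ _ => 0
  | 1 => K
  | n + 2 => fun s s'' => ∑ s', K s s' * kpow K (n + 1) s' s''

theorem norm_pow_sub_pow_le_of_norm_le_one {R : Type*} [SeminormedRing R] {a b : R}
    (ha : ‖a‖ ≤ 1) (hb : ‖b‖ ≤ 1) (n : ℕ) : ‖a ^ n - b ^ n‖ ≤ n * ‖a - b‖ := by
  rcases Nat.eq_zero_or_pos n with rfl | hn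
  · simp
  induction n, hn using Nat.le_induction with
  | base => simp
  | succ n hn ih =>
    have hbn : ‖b ^ n‖ ≤ 1 := (norm_pow_le' b hn).trans (pow_le_one₀ (norm_nonneg b) hb)
    calc ‖a ^ (n + 1) - b ^ (n + 1)‖ = ‖a * (a ^ n - b ^ n) + (a - b) * b ^ n‖ := by
          rw [pow_succ', pow_succ']; noncomm_ring
      _ ≤ ‖a‖ * ‖a ^ n - b ^ n‖ + ‖a - b‖ * ‖b ^ n‖ :=
          (norm_add_le _ _).trans (add_le_add (norm_mul_le _ _) (norm_mul_le _ _))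
      _ ≤ 1 * (n * ‖a - b‖) + ‖a - b‖ * 1 := by gcongr
      _ = (n + 1 : ℕ) * ‖a - b‖ := by push_cast; ring

theorem sum_abs_sum_mul_le_sum_abs {ι κ : Type*} [Fintype ι] [Fintype κ] (f : ι → ℝ)
    {P : ι → κ → ℝ} (hP_nonneg : ∀ i k, 0 ≤ P i k) (hP_sum : ∀ i, ∑ k, P i k = 1) :
    ∑ k, |∑ i, f i * P i k| ≤ ∑ i, |f i| :=
  calc ∑ k, |∑ i, f i * P i k| ≤ ∑ k, ∑ i, |f i| * P i k :=
        sum_le_sum fun k _ => (abs_sum_le_sum_abs _ _).trans_eq <|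
          sum_congr rfl fun i _ => by rw [abs_mul, abs_of_nonneg (hP_nonneg i k)]
    _ = ∑ i, |f i| := by
        rw [sum_comm]
        simp_rw [← mul_sum, hP_sum, mul_one]

open scoped Matrix.Norms.Operator

namespace Matrix

variable {m n α : Type*} [Fintype m] [Fintype n] [SeminormedAddCommGroup α]

theorem sum_norm_row_le_linfty_opNorm (A : Matrix m n α) (i : m) : ∑ j, ‖A i j‖ ≤ ‖A‖ := by
  simpa [linfty_opNorm_def, ← NNReal.coe_le_coe] using
    Finset.le_sup (f := fun i => ∑ j, ‖A i j‖₊) (Finset.mem_univ i)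

theorem norm_entry_le_linfty_opNorm (A : Matrix m n α) (i : m) (j : n) : ‖A i j‖ ≤ ‖A‖ :=
  (Finset.single_le_sum (fun j _ => norm_nonneg (A i j)) (Finset.mem_univ j)).trans
    (sum_norm_row_le_linfty_opNorm A i)

theorem linfty_opNorm_le_of_sum_norm_row_le {r : ℝ} (hr : 0 ≤ r) {A : Matrix m n α}
    (h : ∀ i, ∑ j, ‖A i j‖ ≤ r) : ‖A‖ ≤ r := by
  lift r to NNReal using hr
  rw [linfty_opNorm_def, NNReal.coe_le_coe]
  exact Finset.sup_le fun i _ => by simpa [← NNReal.coe_le_coe] using h i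

theorem linfty_opNorm_le_one_of_mem_rowStochastic [DecidableEq m] {A : Matrix m m ℝ}
    (hA : A ∈ rowStochastic ℝ m) : ‖A‖ ≤ 1 :=
  linfty_opNorm_le_of_sum_norm_row_le zero_le_one fun i =>
    (Finset.sum_congr rfl fun _ _ => Real.norm_of_nonneg (nonneg_of_mem_rowStochastic hA)).trans_le
      (sum_row_of_mem_rowStochastic hA i).le

theorem of_sum_mul_mem_rowStochastic {S A : Type*} [Fintype S] [DecidableEq S] [Fintype A]
    {π : S → A → ℝ} {P : S → A → S → ℝ} (hπ_nonneg : ∀ s a, 0 ≤ π s a)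
    (hπ_sum : ∀ s, ∑ a, π s a = 1) (hP_nonneg : ∀ s a s', 0 ≤ P s a s')
    (hP_sum : ∀ s a, ∑ s', P s a s' = 1) :
    of (fun s s' => ∑ a, π s a * P s a s') ∈ rowStochastic ℝ S := by
  refine mem_rowStochastic_iff_sum.2 ⟨fun s s' => ?_, fun s => ?_⟩
  · exact sum_nonneg fun a _ => mul_nonneg (hπ_nonneg s a) (hP_nonneg s a s')
  · simp only [of_apply]
    rw [sum_comm]
    simp_rw [← mul_sum, hP_sum, mul_one, hπ_sum]

end Matrix

open Matrix

theorem kpow_eq_pow {S : Type*} [Fintype S] [DecidableEq S] (K : S → S → ℝ) {n : ℕ}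
    (hn : 1 ≤ n) (s s' : S) : kpow K n s s' = (of K ^ n) s s' := by
  induction n, hn using Nat.le_induction generalizing s s' with
  | base => simp [kpow]
  | succ n hn ih =>
    obtain ⟨m, rfl⟩ := Nat.exists_eq_add_of_le' hn
    simp [kpow, pow_succ', Matrix.mul_apply, ih]

theorem abstracted_transition_pointwise_bound_general
    {S A : Type*} [Fintype S] [Fintype A]
    (π π' : S → A → ℝ)
    (hπ_nonneg : ∀ s a, 0 ≤ π s a) (hπ_sum : ∀ s, ∑ a, π s a = 1)
    (hπ'_nonneg : ∀ s a, 0 ≤ π' s a) (hπ'_sum : ∀ s, ∑ a, π' s a = 1)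
    (P : S → A → S → ℝ)
    (hP_nonneg : ∀ s a s', 0 ≤ P s a s') (hP_sum : ∀ s a, ∑ s', P s a s' = 1)
    (K K' : S → S → ℝ)
    (hK : ∀ s s', K s s' = ∑ a, π s a * P s a s')
    (hK' : ∀ s s', K' s s' = ∑ a, π' s a * P s a s')
    (ε : ℝ) (hε0 : 0 ≤ ε)
    (hclose : ∀ s, (1 / 2) * ∑ a, |π' s a - π s a| ≤ ε) :
    ∀ c : ℕ, 1 ≤ c → ∀ s s' : S,
      |kpow K' c s s' - kpow K c s s'| ≤ 2 * ε * c := by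
  classical
  have hK_norm : ‖of K‖ ≤ 1 := by
    rw [show K = _ from funext₂ hK]
    exact linfty_opNorm_le_one_of_mem_rowStochastic
      (of_sum_mul_mem_rowStochastic hπ_nonneg hπ_sum hP_nonneg hP_sum)
  have hK'_norm : ‖of K'‖ ≤ 1 := by
    rw [show K' = _ from funext₂ hK']
    exact linfty_opNorm_le_one_of_mem_rowStochastic
      (of_sum_mul_mem_rowStochastic hπ'_nonneg hπ'_sum hP_nonneg hP_sum)
  have hstep : ‖of K' - of K‖ ≤ 2 * ε := by
    refine linfty_opNorm_le_of_sum_norm_row_le (by positivity) fun s => ?_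
    simp only [Matrix.sub_apply, of_apply, Real.norm_eq_abs, hK, hK', ← sum_sub_distrib,
      ← sub_mul]
    linarith [sum_abs_sum_mul_le_sum_abs (fun a => π' s a - π s a) (hP_nonneg s) (hP_sum s),
      hclose s]
  intro c hc s s'
  rw [kpow_eq_pow K' hc, kpow_eq_pow K hc, ← Real.norm_eq_abs, ← Matrix.sub_apply]
  calc _ ≤ ‖of K' ^ c - of K ^ c‖ := norm_entry_le_linfty_opNorm _ s s'
    _ ≤ c * (2 * ε) := (norm_pow_sub_pow_le_of_norm_le_one hK'_norm hK_norm c).trans (by gcongr)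
    _ = 2 * ε * c := mul_comm _ _

theorem abstracted_transition_pointwise_bound
    {S A : Type*} [Fintype S] [Nonempty S] [Fintype A] [Nonempty A]
    (π π' : S → A → ℝ)
    (hπ_nonneg : ∀ s a, 0 ≤ π s a) (hπ_sum : ∀ s, ∑ a, π s a = 1)
    (hπ'_nonneg : ∀ s a, 0 ≤ π' s a) (hπ'_sum : ∀ s, ∑ a, π' s a = 1)
    (P : S → A → S → ℝ)
    (hP_nonneg : ∀ s a s', 0 ≤ P s a s') (hP_sum : ∀ s a, ∑ s', P s a s' = 1)
    (K K' : S → S → ℝ)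
    (hK : ∀ s s', K s s' = ∑ a, π s a * P s a s')
    (hK' : ∀ s s', K' s s' = ∑ a, π' s a * P s a s')
    (ε : ℝ) (hε0 : 0 ≤ ε) (hε1 : ε ≤ 1)
    (hclose : ∀ s, (1 / 2) * ∑ a, |π' s a - π s a| ≤ ε) :
    ∀ c : ℕ, 1 ≤ c → ∀ s s' : S,
      |kpow K' c s s' - kpow K c s s'| ≤ 2 * ε * c :=
  abstracted_transition_pointwise_bound_general π π' hπ_nonneg hπ_sum hπ'_nonneg hπ'_sum P hP_nonneg
    hP_sum K K' hK hK' ε hε0 hclose
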